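/- With the hexagonal lattice random walk of the previous setting, Cov(Xₙ, Yₙ) = σ₁₂ n + θ₅ iₙ for all n ∈ ℕ, where iₙ = (1-(-1)ⁿ)/2, σ₁₂ = (3√3 a²/8)[q₀₁(q₀₁-1) + q₀₂(1-q₀₂) - q₁₁(1-q₁₁) + q₁₂(1-q₁₂)], and θ₅ = (3√3 a²/8)[q₀₁(q₀₁-1) + q₀₂(1-q₀₂) + q₁₁(1-q₁₁) - q₁₂(1-q₁₂)]. -/

import Mathlib

/-!
Covariance is bilinear and the steps are independent, so `Cov(Xₙ, Yₙ)` is the sum of the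
covariances of the single steps. Each step has a three-point law, whose covariance is
`(3√3 a²/4)(q₀₂ - q₀₁)(1 - q₀₁ - q₀₂) = σ₁₂ + θ₅` for even steps and
`(3√3 a²/4)(q₁₂ - q₁₁)(1 - q₁₁ - q₁₂) = σ₁₂ - θ₅` for odd ones; summing `σ₁₂ + θ₅ (-1)ᵏ`
over `k < n` gives the claim.
-/

open MeasureTheory ProbabilityTheory Finset

section ThreePointLaw

variable {α : Type*} [MeasurableSpace α] [MeasurableSingletonClass α] {p q r : ℝ} {u v w : α}

lemma integrable_ofReal_smul_dirac {f : α → ℝ} (x : α) (c : ℝ) :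
    Integrable f (ENNReal.ofReal c • Measure.dirac x) :=
  (integrable_dirac enorm_lt_top).smul_measure ENNReal.ofReal_ne_top

lemma integrable_threePoint (f : α → ℝ) :
    Integrable f (ENNReal.ofReal p • Measure.dirac u + ENNReal.ofReal q • Measure.dirac v
      + ENNReal.ofReal r • Measure.dirac w) := by
  have h (x : α) (c : ℝ) := integrable_ofReal_smul_dirac (f := f) x c
  exact ((h u p).add_measure (h v q)).add_measure (h w r)

lemma integral_threePoint (hp : 0 ≤ p) (hq : 0 ≤ q) (hr : 0 ≤ r) (f : α → ℝ) :
    ∫ x, f x ∂(ENNReal.ofReal p • Measure.dirac u + ENNReal.ofReal q • Measure.dirac v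
      + ENNReal.ofReal r • Measure.dirac w) = p * f u + q * f v + r * f w := by
  have h (x : α) (c : ℝ) := integrable_ofReal_smul_dirac (f := f) x c
  rw [integral_add_measure ((h u p).add_measure (h v q)) (h w r),
    integral_add_measure (h u p) (h v q)]
  simp only [integral_smul_measure, integral_dirac, ENNReal.toReal_ofReal hp,
    ENNReal.toReal_ofReal hq, ENNReal.toReal_ofReal hr, smul_eq_mul]

lemma memLp_two_comp_of_map_eq_threePoint {Ω : Type*} [MeasurableSpace Ω] {μ : Measure Ω}
    {Z : Ω → α} (hZ : Measurable Z)
    (hlaw : μ.map Z = ENNReal.ofReal p • Measure.dirac u + ENNReal.ofReal q • Measure.dirac v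
      + ENNReal.ofReal r • Measure.dirac w) (f : α → ℝ) :
    MemLp (fun ω => f (Z ω)) 2 μ := by
  have hf : MemLp f 2 (μ.map Z) := by
    rw [hlaw, memLp_two_iff_integrable_sq (integrable_threePoint f).aestronglyMeasurable]
    exact integrable_threePoint _
  exact (memLp_map_measure_iff hf.aestronglyMeasurable hZ.aemeasurable).mp hf

end ThreePointLaw

lemma covariance_fst_snd_threePoint {p q r : ℝ} (hp : 0 ≤ p) (hq : 0 ≤ q) (hr : 0 ≤ r)
    (hsum : p + q + r = 1) (x₀ y₀ x₁ y₁ x₂ y₂ : ℝ) :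
    cov[Prod.fst, Prod.snd; ENNReal.ofReal p • Measure.dirac (x₀, y₀)
      + ENNReal.ofReal q • Measure.dirac (x₁, y₁) + ENNReal.ofReal r • Measure.dirac (x₂, y₂)]
      = p * x₀ * y₀ + q * x₁ * y₁ + r * x₂ * y₂
        - (p * x₀ + q * x₁ + r * x₂) * (p * y₀ + q * y₁ + r * y₂) := by
  simp only [covariance, integral_threePoint hp hq hr]
  linear_combination (p * x₀ + q * x₁ + r * x₂) * (p * y₀ + q * y₁ + r * y₂) * hsum

lemma covariance_eq_covariance_map_prodMk {Ω : Type*} [MeasurableSpace Ω] {μ : Measure Ω}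
    {X Y : Ω → ℝ} (hX : AEMeasurable X μ) (hY : AEMeasurable Y μ) :
    cov[X, Y; μ] = cov[Prod.fst, Prod.snd; μ.map fun ω => (X ω, Y ω)] :=
  (covariance_map measurable_fst.aestronglyMeasurable measurable_snd.aestronglyMeasurable
    (hX.prodMk hY)).symm

lemma covariance_sum_sum_of_iIndepFun {Ω ι : Type*} [MeasurableSpace Ω] {μ : Measure Ω}
    [IsFiniteMeasure μ]
    {X Y : ι → Ω → ℝ} (hX : ∀ i, MemLp (X i) 2 μ) (hY : ∀ i, MemLp (Y i) 2 μ)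
    (hind : iIndepFun (fun i ω => (X i ω, Y i ω)) μ) (s : Finset ι) :
    cov[fun ω => ∑ i ∈ s, X i ω, fun ω => ∑ i ∈ s, Y i ω; μ] = ∑ i ∈ s, cov[X i, Y i; μ] := by
  rw [covariance_fun_sum_fun_sum' (fun i _ => hX i) (fun i _ => hY i)]
  refine sum_congr rfl fun i hi => sum_eq_single_of_mem i hi fun j _ hji => ?_
  exact ((hind.indepFun hji.symm).comp measurable_fst measurable_snd).covariance_eq_zero
    (hX i) (hY j)

lemma sum_range_add_mul_neg_one_pow (σ θ : ℝ) (n : ℕ) :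
    ∑ k ∈ range n, (σ + θ * (-1) ^ k) = σ * n + θ * ((1 - (-1) ^ n) / 2) := by
  rw [sum_add_distrib, ← mul_sum, geom_sum_eq (by norm_num) n]
  simp only [sum_const, card_range, nsmul_eq_mul]
  ring

theorem stmt_13_general {Ω : Type*} [MeasurableSpace Ω] (μ : Measure Ω) [IsProbabilityMeasure μ]
    (a : ℝ)
    (q₀₀ q₀₁ q₀₂ q₁₀ q₁₁ q₁₂ : ℝ)
    (hq₀₀ : 0 ≤ q₀₀) (hq₀₁ : 0 ≤ q₀₁) (hq₀₂ : 0 ≤ q₀₂)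
    (hq₁₀ : 0 ≤ q₁₀) (hq₁₁ : 0 ≤ q₁₁) (hq₁₂ : 0 ≤ q₁₂)
    (hsum₀ : q₀₀ + q₀₁ + q₀₂ = 1) (hsum₁ : q₁₀ + q₁₁ + q₁₂ = 1)
    (X Y : ℕ → Ω → ℝ)
    (hXm : ∀ k, Measurable (X k)) (hYm : ∀ k, Measurable (Y k))
    (hlaw₀ : ∀ k, Even k → μ.map (fun ω => (X k ω, Y k ω)) =
        ENNReal.ofReal q₀₀ • Measure.dirac ((a, 0) : ℝ × ℝ)
      + ENNReal.ofReal q₀₁ • Measure.dirac ((-a / 2, a * Real.sqrt 3 / 2) : ℝ × ℝ)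
      + ENNReal.ofReal q₀₂ • Measure.dirac ((-a / 2, -(a * Real.sqrt 3) / 2) : ℝ × ℝ))
    (hlaw₁ : ∀ k, Odd k → μ.map (fun ω => (X k ω, Y k ω)) =
        ENNReal.ofReal q₁₀ • Measure.dirac ((-a, 0) : ℝ × ℝ)
      + ENNReal.ofReal q₁₁ • Measure.dirac ((a / 2, -(a * Real.sqrt 3) / 2) : ℝ × ℝ)
      + ENNReal.ofReal q₁₂ • Measure.dirac ((a / 2, a * Real.sqrt 3 / 2) : ℝ × ℝ))
    (hind : iIndepFun
      (fun k ω => (X k ω, Y k ω)) μ)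
    (n : ℕ) :
    ∫ ω, ((∑ k ∈ Finset.range n, X k ω) - ∫ ω', (∑ k ∈ Finset.range n, X k ω') ∂μ)
        * ((∑ k ∈ Finset.range n, Y k ω) - ∫ ω', (∑ k ∈ Finset.range n, Y k ω') ∂μ) ∂μ =
      (3 * Real.sqrt 3 * a ^ 2 / 8)
        * (q₀₁ * (q₀₁ - 1) + q₀₂ * (1 - q₀₂) - q₁₁ * (1 - q₁₁) + q₁₂ * (1 - q₁₂)) * n
      + (3 * Real.sqrt 3 * a ^ 2 / 8)
        * (q₀₁ * (q₀₁ - 1) + q₀₂ * (1 - q₀₂) + q₁₁ * (1 - q₁₁) - q₁₂ * (1 - q₁₂))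
        * ((1 - (-1 : ℝ) ^ n) / 2) := by
  have hmemLp (k : ℕ) (f : ℝ × ℝ → ℝ) : MemLp (fun ω => f (X k ω, Y k ω)) 2 μ := by
    rcases Nat.even_or_odd k with hk | hk
    · exact memLp_two_comp_of_map_eq_threePoint ((hXm k).prodMk (hYm k)) (hlaw₀ k hk) f
    · exact memLp_two_comp_of_map_eq_threePoint ((hXm k).prodMk (hYm k)) (hlaw₁ k hk) f
  have hstep (k : ℕ) : cov[X k, Y k; μ] =
      (3 * Real.sqrt 3 * a ^ 2 / 8)
        * (q₀₁ * (q₀₁ - 1) + q₀₂ * (1 - q₀₂) - q₁₁ * (1 - q₁₁) + q₁₂ * (1 - q₁₂))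
      + (3 * Real.sqrt 3 * a ^ 2 / 8)
        * (q₀₁ * (q₀₁ - 1) + q₀₂ * (1 - q₀₂) + q₁₁ * (1 - q₁₁) - q₁₂ * (1 - q₁₂)) * (-1) ^ k := by
    rw [covariance_eq_covariance_map_prodMk (hXm k).aemeasurable (hYm k).aemeasurable]
    rcases Nat.even_or_odd k with hk | hk
    · rw [hlaw₀ k hk, covariance_fst_snd_threePoint hq₀₀ hq₀₁ hq₀₂ hsum₀, hk.neg_one_pow,
        show q₀₀ = 1 - q₀₁ - q₀₂ by linarith]
      ring
    · rw [hlaw₁ k hk, covariance_fst_snd_threePoint hq₁₀ hq₁₁ hq₁₂ hsum₁, hk.neg_one_pow,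
        show q₁₀ = 1 - q₁₁ - q₁₂ by linarith]
      ring
  have hcov := covariance_sum_sum_of_iIndepFun (fun k => hmemLp k Prod.fst)
    (fun k => hmemLp k Prod.snd) hind (range n)
  rw [sum_congr rfl fun k _ => hstep k, sum_range_add_mul_neg_one_pow] at hcov
  exact hcov

theorem stmt_13 {Ω : Type*} [MeasurableSpace Ω] (μ : Measure Ω) [IsProbabilityMeasure μ]
    (a : ℝ) (ha : 0 < a)
    (q₀₀ q₀₁ q₀₂ q₁₀ q₁₁ q₁₂ : ℝ)
    (hq₀₀ : 0 ≤ q₀₀) (hq₀₁ : 0 ≤ q₀₁) (hq₀₂ : 0 ≤ q₀₂)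
    (hq₁₀ : 0 ≤ q₁₀) (hq₁₁ : 0 ≤ q₁₁) (hq₁₂ : 0 ≤ q₁₂)
    (hsum₀ : q₀₀ + q₀₁ + q₀₂ = 1) (hsum₁ : q₁₀ + q₁₁ + q₁₂ = 1)
    (X Y : ℕ → Ω → ℝ)
    (hXm : ∀ k, Measurable (X k)) (hYm : ∀ k, Measurable (Y k))
    (hlaw₀ : ∀ k, Even k → μ.map (fun ω => (X k ω, Y k ω)) =
        ENNReal.ofReal q₀₀ • Measure.dirac ((a, 0) : ℝ × ℝ)
      + ENNReal.ofReal q₀₁ • Measure.dirac ((-a / 2, a * Real.sqrt 3 / 2) : ℝ × ℝ)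
      + ENNReal.ofReal q₀₂ • Measure.dirac ((-a / 2, -(a * Real.sqrt 3) / 2) : ℝ × ℝ))
    (hlaw₁ : ∀ k, Odd k → μ.map (fun ω => (X k ω, Y k ω)) =
        ENNReal.ofReal q₁₀ • Measure.dirac ((-a, 0) : ℝ × ℝ)
      + ENNReal.ofReal q₁₁ • Measure.dirac ((a / 2, -(a * Real.sqrt 3) / 2) : ℝ × ℝ)
      + ENNReal.ofReal q₁₂ • Measure.dirac ((a / 2, a * Real.sqrt 3 / 2) : ℝ × ℝ))
    (hind : iIndepFun
      (fun k ω => (X k ω, Y k ω)) μ)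
    (n : ℕ) :
    ∫ ω, ((∑ k ∈ Finset.range n, X k ω) - ∫ ω', (∑ k ∈ Finset.range n, X k ω') ∂μ)
        * ((∑ k ∈ Finset.range n, Y k ω) - ∫ ω', (∑ k ∈ Finset.range n, Y k ω') ∂μ) ∂μ =
      (3 * Real.sqrt 3 * a ^ 2 / 8)
        * (q₀₁ * (q₀₁ - 1) + q₀₂ * (1 - q₀₂) - q₁₁ * (1 - q₁₁) + q₁₂ * (1 - q₁₂)) * n
      + (3 * Real.sqrt 3 * a ^ 2 / 8)
        * (q₀₁ * (q₀₁ - 1) + q₀₂ * (1 - q₀₂) + q₁₁ * (1 - q₁₁) - q₁₂ * (1 - q₁₂))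
        * ((1 - (-1 : ℝ) ^ n) / 2) :=
  stmt_13_general μ a q₀₀ q₀₁ q₀₂ q₁₀ q₁₁ q₁₂ hq₀₀ hq₀₁ hq₀₂ hq₁₀ hq₁₁ hq₁₂ hsum₀ hsum₁ X Y hXm hYm
    hlaw₀ hlaw₁ hind n
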